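/- arXiv:2512.23952 — 4 statements merged into one kernel-verified Lean document; each statement's English description precedes it below -/
import Mathlib

section
/- For all real constants κ₁ < 0 and κ₂ > 0, the function g(r) = κ₁ / (1 − exp(κ₂·r)) is strictly convex on the interval (0, ∞). -/
/-!
With `e = exp (κ₂ r)`, the derivative of `g` is `κ₁ κ₂ e / (1 - e)² = κ₁ κ₂ / (2 (cosh (κ₂ r) - 1))`.
As `κ₁ κ₂ < 0` and `cosh` increases on `(0, ∞)`, `g'` is strictly increasing there.
-/

open Real Set

theorem two_mul_cosh_sub_one (t : ℝ) : 2 * (cosh t - 1) = (1 - exp t) ^ 2 / exp t := by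
  rw [cosh_eq, exp_neg]
  field_simp
  ring

theorem hasDerivAt_div_one_sub_exp (c k x : ℝ) (hx : k * x ≠ 0) :
    HasDerivAt (fun r => c / (1 - exp (k * r))) (c * k / (2 * (cosh (k * x) - 1))) x := by
  have hexp : 1 - exp (k * x) ≠ 0 := sub_ne_zero.2 (Ne.symm ((exp_eq_one_iff _).not.2 hx))
  refine ((hasDerivAt_const x c).div
    ((hasDerivAt_const x 1).sub ((hasDerivAt_id x).const_mul k).exp) hexp).congr_deriv ?_
  simp only [id, Pi.sub_apply]
  rw [two_mul_cosh_sub_one]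
  field_simp
  ring

theorem strictMonoOn_div_two_mul_cosh_sub_one {a k : ℝ} (ha : a < 0) (hk : 0 < k) :
    StrictMonoOn (fun x => a / (2 * (cosh (k * x) - 1))) (Ioi 0) := by
  intro x hx y hy hxy
  have hpos : 0 < 2 * (cosh (k * x) - 1) := by linarith [one_lt_cosh.2 (mul_pos hk hx).ne']
  have hlt : cosh (k * x) < cosh (k * y) :=
    cosh_strictMonoOn (mul_pos hk hx).le (mul_pos hk hy).le (mul_lt_mul_of_pos_left hxy hk)
  have hinv : (2 * (cosh (k * y) - 1))⁻¹ < (2 * (cosh (k * x) - 1))⁻¹ :=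
    inv_strictAntiOn hpos (by simp only [mem_Ioi]; linarith) (by linarith)
  simpa only [div_eq_mul_inv] using mul_lt_mul_of_neg_left hinv ha

/-- The fitted CPU-delay term `g(r) = κ₁ / (1 − exp(κ₂·r))` is strictly convex
on `(0, ∞)` for all `κ₁ < 0` and `κ₂ > 0`. -/
theorem cpu_delay_strict_convex
    (κ₁ κ₂ : ℝ) (hκ₁ : κ₁ < 0) (hκ₂ : 0 < κ₂) :
    StrictConvexOn ℝ (Set.Ioi (0 : ℝ))
      (fun r : ℝ => κ₁ / (1 - Real.exp (κ₂ * r))) := by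
  have hderiv : ∀ x ∈ Ioi (0 : ℝ), HasDerivAt (fun r => κ₁ / (1 - exp (κ₂ * r)))
      (κ₁ * κ₂ / (2 * (cosh (κ₂ * x) - 1))) x := fun x hx =>
    hasDerivAt_div_one_sub_exp κ₁ κ₂ x (mul_pos hκ₂ hx).ne'
  refine StrictMonoOn.strictConvexOn_of_deriv (convex_Ioi 0)
    (fun x hx => (hderiv x hx).continuousAt.continuousWithinAt) ?_
  rw [interior_Ioi]
  exact (strictMonoOn_div_two_mul_cosh_sub_one (mul_neg_of_neg_of_pos hκ₁ hκ₂) hκ₂).congr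
    fun x hx => (hderiv x hx).deriv.symm
end

section
/- The per-container utility F(r_cpu, r_mem) = α·x̄·(g(r_cpu) + m(r_mem)) + c·r_cpu is a convex function on the open positive quadrant {(r_cpu, r_mem) : r_cpu > 0, r_mem > 0}, and for every fixed r_cpu > 0 the map r_mem ↦ F(r_cpu, r_mem) is strictly decreasing on (0, ∞). -/
open Real Set

/-!
`F` is a positive multiple of `g(r_cpu) + m(r_mem)` plus a linear term, so it suffices that `g`
and `m` are convex on `(0, ∞)`. With `φ t = (exp t - 1)⁻¹` we have `g r = -κ₁ * φ (κ₂ * r)` and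
`φ' = -(φ + φ²)`; as `φ` is positive and decreasing on `(0, ∞)`, `φ'` is increasing and `φ` is
convex. The memory term is `exp` (convex, monotone) after the convex, decreasing `r ↦ κ₃ / r`.
-/

lemma hasDerivAt_inv_exp_sub_one {t : ℝ} (ht : t ≠ 0) :
    HasDerivAt (fun t => (exp t - 1)⁻¹) (-((exp t - 1)⁻¹ + (exp t - 1)⁻¹ ^ 2)) t := by
  have hne : exp t - 1 ≠ 0 := sub_ne_zero.2 (mt (exp_eq_one_iff t).1 ht)
  refine (((hasDerivAt_exp t).sub_const 1).inv hne).congr_deriv ?_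
  field_simp
  ring

lemma antitoneOn_inv_exp_sub_one : AntitoneOn (fun t => (exp t - 1)⁻¹) (Ioi 0) :=
  fun _ hx _ _ hxy => inv_anti₀ (sub_pos.2 (one_lt_exp_iff.2 hx)) (by gcongr)

lemma convexOn_inv_exp_sub_one : ConvexOn ℝ (Ioi 0) fun t => (exp t - 1)⁻¹ := by
  have hderiv {t : ℝ} (ht : t ∈ Ioi 0) := hasDerivAt_inv_exp_sub_one ht.ne'
  refine MonotoneOn.convexOn_of_deriv (convex_Ioi 0)
    (fun t ht => (hderiv ht).continuousAt.continuousWithinAt)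
    (fun t ht => (hderiv (interior_Ioi.subset ht)).differentiableAt.differentiableWithinAt) ?_
  rw [interior_Ioi]
  intro x hx y hy hxy
  have hφ := antitoneOn_inv_exp_sub_one hx hy hxy
  have hφ_nonneg : 0 ≤ (exp y - 1)⁻¹ := inv_nonneg.2 (sub_nonneg.2 (one_le_exp hy.le))
  rw [(hderiv hx).deriv, (hderiv hy).deriv, neg_le_neg_iff]
  gcongr

lemma convexOn_div_one_sub_exp_mul {κ₁ κ₂ : ℝ} (hκ₁ : κ₁ ≤ 0) (hκ₂ : 0 < κ₂) :
    ConvexOn ℝ (Ioi 0) fun r => κ₁ / (1 - exp (κ₂ * r)) := by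
  have hcomp := convexOn_inv_exp_sub_one.comp_linearMap (κ₂ • LinearMap.id)
  refine ((hcomp.subset (fun r hr => mul_pos hκ₂ hr) (convex_Ioi 0)).smul
    (neg_nonneg.2 hκ₁)).congr fun r _ => ?_
  simp only [Function.comp_apply, LinearMap.smul_apply, LinearMap.id_apply, smul_eq_mul]
  rw [div_eq_mul_inv, ← neg_sub, inv_neg]
  ring

lemma ConvexOn.exp {E : Type*} [AddCommMonoid E] [Module ℝ E] {s : Set E} {f : E → ℝ}
    (hf : ConvexOn ℝ s f) : ConvexOn ℝ s fun x => exp (f x) :=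
  ⟨hf.1, fun _ hx _ hy _ _ ha hb hab =>
    (exp_le_exp.2 (hf.2 hx hy ha hb hab)).trans (convexOn_exp.2 trivial trivial ha hb hab)⟩

lemma convexOn_exp_div {κ : ℝ} (hκ : 0 ≤ κ) : ConvexOn ℝ (Ioi 0) fun r => exp (κ / r) :=
  (((convexOn_zpow (-1)).smul hκ).congr fun r _ => by
    simp only [zpow_neg_one, smul_eq_mul, div_eq_mul_inv]).exp

lemma strictAntiOn_exp_div {κ : ℝ} (hκ : 0 < κ) : StrictAntiOn (fun r => exp (κ / r)) (Ioi 0) :=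
  fun _ hx _ _ hxy => exp_lt_exp.2 (div_lt_div_of_pos_left hκ hx hxy)

section Prod

variable {𝕜 E F : Type*} [Semiring 𝕜] [PartialOrder 𝕜] [AddCommMonoid E] [AddCommMonoid F]
  [Module 𝕜 E] [Module 𝕜 F] {β : Type*} [AddCommMonoid β] [PartialOrder β] [SMul 𝕜 β]
  {s : Set E} {t : Set F}

lemma ConvexOn.comp_fst {f : E → β} (hf : ConvexOn 𝕜 s f) (ht : Convex 𝕜 t) :
    ConvexOn 𝕜 (s ×ˢ t) fun p => f p.1 :=
  (hf.comp_linearMap (LinearMap.fst 𝕜 E F)).subset (fun _ hp => hp.1) (hf.1.prod ht)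

lemma ConvexOn.comp_snd {g : F → β} (hg : ConvexOn 𝕜 t g) (hs : Convex 𝕜 s) :
    ConvexOn 𝕜 (s ×ˢ t) fun p => g p.2 :=
  (hg.comp_linearMap (LinearMap.snd 𝕜 E F)).subset (fun _ hp => hp.2) (hs.prod hg.1)

end Prod

/-- The per-container utility
`F(r_cpu, r_mem) = α·x̄·(g(r_cpu) + m(r_mem)) + c·r_cpu`, with
`g(r) = κ₁/(1 − exp(κ₂·r))` and `m(r) = exp(κ₃/r)`, is convex on the open
positive quadrant, and for every fixed `r_cpu > 0` the map
`r_mem ↦ F(r_cpu, r_mem)` is strictly decreasing on `(0, ∞)`. -/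
theorem per_container_utility_convex_and_mem_decreasing
    (κ₁ κ₂ κ₃ α xbar c : ℝ)
    (hκ₁ : κ₁ < 0) (hκ₂ : 0 < κ₂) (hκ₃ : 0 < κ₃)
    (hα : 0 < α) (hx : 0 < xbar) (hc : 0 ≤ c) :
    ConvexOn ℝ (Set.Ioi (0 : ℝ) ×ˢ Set.Ioi (0 : ℝ))
      (fun p : ℝ × ℝ =>
        α * xbar * (κ₁ / (1 - Real.exp (κ₂ * p.1)) + Real.exp (κ₃ / p.2))
          + c * p.1) ∧
    ∀ rcpu : ℝ, 0 < rcpu →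
      StrictAntiOn
        (fun rmem : ℝ =>
          α * xbar * (κ₁ / (1 - Real.exp (κ₂ * rcpu)) + Real.exp (κ₃ / rmem))
            + c * rcpu)
        (Set.Ioi (0 : ℝ)) := by
  refine ⟨?_, fun rcpu _ rmem hrmem rmem' hrmem' hlt => ?_⟩
  · have hcpu := (convexOn_div_one_sub_exp_mul hκ₁.le hκ₂).comp_fst (convex_Ioi (0 : ℝ))
    have hmem := (convexOn_exp_div hκ₃.le).comp_snd (convex_Ioi (0 : ℝ))
    have hpower := ((LinearMap.fst ℝ ℝ ℝ).convexOn (hcpu.1)).smul hc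
    exact ((hcpu.add hmem).smul (mul_pos hα hx).le).add hpower
  · have hdelay := strictAntiOn_exp_div hκ₃ hrmem hrmem' hlt
    dsimp only
    gcongr
end

section
/- Under the memory bounds 0 < r_min ≤ r_max, for every fixed r_cpu > 0 and every r_mem with r_min ≤ r_mem ≤ r_max, one has F(r_cpu, r_max) ≤ F(r_cpu, r_mem); that is, the optimal memory allocation for the sufficient-resource subproblem SP1 is attained at the upper bound r_mem = r_max. -/
open Real Set

theorem antitoneOn_exp_div {κ : ℝ} (hκ : 0 ≤ κ) : AntitoneOn (fun r => exp (κ / r)) (Ioi 0) :=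
  fun _ ha _ _ hab => exp_le_exp.mpr (div_le_div_of_nonneg_left hκ ha hab)

theorem sp1_memory_optimal_at_upper_bound_general
    (κ₁ κ₂ κ₃ α xbar c rmin rmax : ℝ)
    (hκ₃ : 0 < κ₃)
    (hα : 0 < α) (hx : 0 < xbar)
    (hrmin : 0 < rmin)
    (rcpu : ℝ)
    (rmem : ℝ) (h₁ : rmin ≤ rmem) (h₂ : rmem ≤ rmax) :
    α * xbar * (κ₁ / (1 - Real.exp (κ₂ * rcpu)) + Real.exp (κ₃ / rmax))
        + c * rcpu ≤
      α * xbar * (κ₁ / (1 - Real.exp (κ₂ * rcpu)) + Real.exp (κ₃ / rmem))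
        + c * rcpu := by
  have hrmem : 0 < rmem := hrmin.trans_le h₁
  have hmemory : exp (κ₃ / rmax) ≤ exp (κ₃ / rmem) :=
    antitoneOn_exp_div hκ₃.le hrmem (hrmem.trans_le h₂) h₂
  gcongr

/-- Under memory bounds `0 < r_min ≤ r_max`, for every fixed `r_cpu > 0` and
every `r_mem` with `r_min ≤ r_mem ≤ r_max`, one has
`F(r_cpu, r_max) ≤ F(r_cpu, r_mem)`, where
`F(r_cpu, r_mem) = α·x̄·(κ₁/(1 − exp(κ₂·r_cpu)) + exp(κ₃/r_mem)) + c·r_cpu`: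
the optimal memory allocation of subproblem SP1 is attained at `r_mem = r_max`. -/
theorem sp1_memory_optimal_at_upper_bound
    (κ₁ κ₂ κ₃ α xbar c rmin rmax : ℝ)
    (hκ₁ : κ₁ < 0) (hκ₂ : 0 < κ₂) (hκ₃ : 0 < κ₃)
    (hα : 0 < α) (hx : 0 < xbar) (hc : 0 ≤ c)
    (hrmin : 0 < rmin) (hbounds : rmin ≤ rmax)
    (rcpu : ℝ) (hrcpu : 0 < rcpu)
    (rmem : ℝ) (h₁ : rmin ≤ rmem) (h₂ : rmem ≤ rmax) :
    α * xbar * (κ₁ / (1 - Real.exp (κ₂ * rcpu)) + Real.exp (κ₃ / rmax))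
        + c * rcpu ≤
      α * xbar * (κ₁ / (1 - Real.exp (κ₂ * rcpu)) + Real.exp (κ₃ / rmem))
        + c * rcpu :=
  sp1_memory_optimal_at_upper_bound_general κ₁ κ₂ κ₃ α xbar c rmin rmax hκ₃ hα hx hrmin rcpu rmem h₁
    h₂
end

section
/- For every arrival rate λ > 0 and service rate μ > 0, the M/M/N expected response time is discretely convex in the number of servers: for every integer N ≥ 2 with λ < (N − 1)·μ, one has W_s(N + 1, λ, μ) + W_s(N − 1, λ, μ) ≥ 2·W_s(N, λ, μ). -/
/-- Steady-state empty-system probability of the M/M/N queue. -/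
noncomputable def pi0 (N : ℕ) (lam mu : ℝ) : ℝ :=
  (∑ k ∈ Finset.range N, (1 / (Nat.factorial k : ℝ)) * (lam / mu) ^ k +
      (lam / mu) ^ N / ((Nat.factorial N : ℝ) * (1 - lam / (N * mu))))⁻¹

/-- Expected number of requests in the M/M/N system. -/
noncomputable def Ls (N : ℕ) (lam mu : ℝ) : ℝ :=
  ((lam / mu) ^ N * (lam / (N * mu)) /
      ((Nat.factorial N : ℝ) * (1 - lam / (N * mu)) ^ 2)) * pi0 N lam mu
    + lam / mu

/-- Expected response time of the M/M/N queue (Little's law). -/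
noncomputable def Ws (N : ℕ) (lam mu : ℝ) : ℝ := Ls N lam mu / lam

/-!
Write `c = Nμ - λ` for the spare capacity and `B` for the reciprocal of the Erlang B blocking
probability with `N - 1` servers. Then `W_s(N) = 1/μ + λ / (c (c B + λ))`: the second term is
the Erlang C probability `λ / (c B + λ)` divided by `c`, i.e. the mean waiting time in queue.
Passing from `N - 1` to `N` and `N + 1` servers shifts `c` by `μ` and `2μ`, while the Erlang B
recursion `B ↦ 1 + (λ + c) B / λ` expresses the two other values of `B` linearly through the
first. After clearing denominators, the convexity inequality becomes the nonnegativity of a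
polynomial in `λ, μ, c, B` all of whose coefficients are nonnegative.
-/

open Nat

/-- The reciprocal of the Erlang B blocking probability with `M` servers and offered load `ρ`. -/
noncomputable def invErlangB (ρ : ℝ) : ℕ → ℝ
  | 0 => 1
  | M + 1 => 1 + (M + 1) / ρ * invErlangB ρ M

lemma invErlangB_nonneg {ρ : ℝ} (hρ : 0 ≤ ρ) : ∀ M, 0 ≤ invErlangB ρ M
  | 0 => zero_le_one
  | M + 1 => by
    have := invErlangB_nonneg hρ M
    rw [invErlangB]
    positivity

lemma sum_range_succ_pow_div_factorial {ρ : ℝ} (hρ : ρ ≠ 0) : ∀ M : ℕ,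
    ∑ k ∈ Finset.range (M + 1), 1 / (k ! : ℝ) * ρ ^ k = ρ ^ M / M ! * invErlangB ρ M
  | 0 => by simp [invErlangB]
  | M + 1 => by
    rw [Finset.sum_range_succ, sum_range_succ_pow_div_factorial hρ M, invErlangB,
      Nat.factorial_succ]
    push_cast
    field_simp
    ring

section ClosedForm

variable {lam mu c : ℝ} {M : ℕ}

lemma pi0_succ_eq (hlam : 0 < lam) (hmu : 0 < mu) (hc : 0 < c)
    (hcM : ((M : ℝ) + 1) * mu - lam = c) :
    pi0 (M + 1) lam mu = c * M ! / ((lam / mu) ^ M * (c * invErlangB (lam / mu) M + lam)) := by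
  unfold pi0
  rw [sum_range_succ_pow_div_factorial (div_pos hlam hmu).ne', Nat.factorial_succ, pow_succ]
  push_cast
  rw [one_sub_div (by positivity), hcM]
  field_simp

lemma Ws_succ_eq (hlam : 0 < lam) (hmu : 0 < mu) (hc : 0 < c)
    (hcM : ((M : ℝ) + 1) * mu - lam = c) :
    Ws (M + 1) lam mu = lam / (c * (c * invErlangB (lam / mu) M + lam)) + 1 / mu := by
  unfold Ws Ls
  rw [pi0_succ_eq hlam hmu hc hcM, Nat.factorial_succ, pow_succ]
  push_cast
  rw [one_sub_div (by positivity), hcM]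
  field_simp

end ClosedForm

lemma waitingTime_convex_step {lam mu c V B₁ B₂ : ℝ} (hlam : 0 < lam) (hmu : 0 ≤ mu)
    (hc : 0 < c) (hV : 0 ≤ V) (hB₁ : B₁ = 1 + (lam + c) / lam * V)
    (hB₂ : B₂ = 1 + (lam + c + mu) / lam * B₁) :
    2 * (lam / ((c + mu) * ((c + mu) * B₁ + lam))) ≤
      lam / ((c + 2 * mu) * ((c + 2 * mu) * B₂ + lam)) + lam / (c * (c * V + lam)) := by
  subst hB₁ hB₂
  field_simp
  rw [← sub_nonneg]
  ring_nf
  positivity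

/-- The M/M/N expected response time is discretely convex in the number of
servers: for every integer `N ≥ 2` with `λ < (N − 1)·μ`, one has
`W_s(N + 1, λ, μ) + W_s(N − 1, λ, μ) ≥ 2·W_s(N, λ, μ)`. -/
theorem Ws_discrete_convex
    (lam mu : ℝ) (hlam : 0 < lam) (hmu : 0 < mu)
    (N : ℕ) (hN : 2 ≤ N) (hstab : lam < ((N : ℝ) - 1) * mu) :
    2 * Ws N lam mu ≤ Ws (N + 1) lam mu + Ws (N - 1) lam mu := by
  obtain ⟨n, rfl⟩ : ∃ n, N = n + 1 + 1 := ⟨N - 2, by omega⟩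
  set c := ((n : ℝ) + 1) * mu - lam
  have hc : 0 < c := by push_cast at hstab; linarith
  rw [Nat.add_sub_cancel,
    Ws_succ_eq (M := n + 1 + 1) (c := c + 2 * mu) hlam hmu (by positivity) (by push_cast; ring),
    Ws_succ_eq (M := n + 1) (c := c + mu) hlam hmu (by positivity) (by push_cast; ring),
    Ws_succ_eq (M := n) hlam hmu hc rfl]
  have step := waitingTime_convex_step hlam hmu.le hc
    (invErlangB_nonneg (div_pos hlam hmu).le n)
    (B₁ := invErlangB (lam / mu) (n + 1)) (B₂ := invErlangB (lam / mu) (n + 1 + 1))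
    (by rw [invErlangB]; field_simp; ring) (by rw [invErlangB]; push_cast; field_simp; ring)
  linarith
end
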